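/- Fix data (y_i,x_i)_{i=1}^n and tau > 0. Let E be a subset of {1,...,d} and beta* in R^d with beta*_j = 0 for all j not in E. Let lambda in R^d have nonnegative entries, let eps > 0 and lambda_0 > 0 satisfy lambda_0 >= ||lambda||_inf, lambda_0 >= 4*(||grad L_hat_tau(beta*)||_inf + eps), and min_{j not in E} lambda_j >= lambda_0/2. Then every eps-optimal solution beta_tilde of min_beta { L_hat_tau(beta) + ||lambda o beta||_1 } satisfies ||(beta_tilde - beta*)_{E^c}||_1 <= [ (||lambda||_inf + ||grad L_hat_tau(beta*)||_inf + eps) / ( min_{j not in E} lambda_j - ||grad L_hat_tau(beta*)||_inf - eps ) ] * ||(beta_tilde - beta*)_E||_1, and consequently ||(beta_tilde - beta*)_{E^c}||_1 <= 5*||(beta_tilde - beta*)_E||_1. -/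

import Mathlib

set_option autoImplicit false

open MeasureTheory ProbabilityTheory Filter

noncomputable section

/-- The Huber loss with robustification parameter `τ`. -/
def huber (τ x : ℝ) : ℝ := if |x| ≤ τ then x ^ 2 / 2 else τ * |x| - τ ^ 2 / 2

/-- The derivative of the Huber loss. -/
def huberDeriv (τ x : ℝ) : ℝ := if |x| ≤ τ then x else τ * Real.sign x

/-- Empirical Huber loss `L̂_τ(β) = n⁻¹ ∑ᵢ ℓ_τ(yᵢ - ⟨xᵢ, β⟩)`. -/
def empLoss {n d : ℕ} (y : Fin n → ℝ) (X : Fin n → Fin d → ℝ) (τ : ℝ)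
    (β : Fin d → ℝ) : ℝ :=
  (n : ℝ)⁻¹ * ∑ i, huber τ (y i - ∑ j, X i j * β j)

/-- Gradient of the empirical Huber loss:
`∇L̂_τ(β) = -n⁻¹ ∑ᵢ ℓ'_τ(yᵢ - ⟨xᵢ, β⟩) xᵢ`. -/
def empGrad {n d : ℕ} (y : Fin n → ℝ) (X : Fin n → Fin d → ℝ) (τ : ℝ)
    (β : Fin d → ℝ) : Fin d → ℝ :=
  fun j => -(n : ℝ)⁻¹ * ∑ i, huberDeriv τ (y i - ∑ j', X i j' * β j') * X i j

/-- ℓ¹ norm on `Fin d → ℝ`. -/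
def norm1 {d : ℕ} (v : Fin d → ℝ) : ℝ := ∑ j, |v j|

/-- Euclidean (ℓ²) norm on `Fin d → ℝ`. -/
def norm2 {d : ℕ} (v : Fin d → ℝ) : ℝ := Real.sqrt (∑ j, v j ^ 2)

/-- Sup (ℓ^∞) norm on `Fin d → ℝ`. -/
def normInf {d : ℕ} (v : Fin d → ℝ) : ℝ := ⨆ j, |v j|

/-- The subdifferential of the ℓ¹ norm at `β`. -/
def l1Subdiff {d : ℕ} (β : Fin d → ℝ) : Set (Fin d → ℝ) :=
  {ξ | ∀ j, if β j = 0 then ξ j ∈ Set.Icc (-1 : ℝ) 1 else ξ j = Real.sign (β j)}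

/-- `β` is an `ε`-optimal solution of `min L̂_τ + ‖lam ∘ ·‖₁`:  the suboptimality
measure `ω_lam(β) = min_{ξ ∈ ∂‖β‖₁} ‖∇L̂_τ(β) + lam ∘ ξ‖_∞` is at most `ε`. -/
def IsEpsOptimal {n d : ℕ} (y : Fin n → ℝ) (X : Fin n → Fin d → ℝ) (τ : ℝ)
    (lam : Fin d → ℝ) (ε : ℝ) (β : Fin d → ℝ) : Prop :=
  ∃ ξ ∈ l1Subdiff β, normInf (fun j => empGrad y X τ β j + lam j * ξ j) ≤ ε

/-! Write `u = β̃ - β*` and let `ξ` be the subgradient witnessing `ε`-optimality. Hölder's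
inequality gives `⟨∇L̂(β̃) + λ ∘ ξ, u⟩ ≤ ε ‖u‖₁`, and since `ℓ'_τ` is monotone the gradient
`∇L̂` is a monotone operator, so `⟨λ ∘ ξ, u⟩ ≤ (ε + ‖∇L̂(β*)‖_∞) ‖u‖₁`. Off `E` we have
`u_j = β̃_j` and `ξ_j β̃_j = |β̃_j|`, hence `⟨λ ∘ ξ, u⟩ ≥ min_{Eᶜ} λ ‖u_{Eᶜ}‖₁ - ‖λ‖_∞ ‖u_E‖₁`.
Comparing the two bounds gives the cone inequality, and the conditions on `λ₀` bound its
constant by `5`. -/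

theorem Monotone.sub_mul_sub_nonneg {α : Type*} [Ring α] [LinearOrder α] [IsOrderedRing α]
    {f : α → α} (hf : Monotone f) (a b : α) : 0 ≤ (f a - f b) * (a - b) := by
  rcases le_total a b with h | h
  · exact mul_nonneg_of_nonpos_of_nonpos (sub_nonpos.2 (hf h)) (sub_nonpos.2 h)
  · exact mul_nonneg (sub_nonneg.2 (hf h)) (sub_nonneg.2 h)

lemma huberDeriv_eq_max_min {τ : ℝ} (hτ : 0 ≤ τ) (x : ℝ) :
    huberDeriv τ x = max (-τ) (min τ x) := by
  unfold huberDeriv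
  split_ifs with h
  · rw [abs_le] at h
    rw [min_eq_right h.2, max_eq_right h.1]
  · rcases lt_trichotomy x 0 with hx | rfl | hx
    · rw [abs_of_neg hx] at h
      rw [Real.sign_of_neg hx, min_eq_right (by linarith), max_eq_left (by linarith)]
      ring
    · exact (h (by simpa using hτ)).elim
    · rw [abs_of_pos hx] at h
      rw [Real.sign_of_pos hx, min_eq_left (by linarith), max_eq_right (by linarith)]
      ring

lemma monotone_huberDeriv {τ : ℝ} (hτ : 0 ≤ τ) : Monotone (huberDeriv τ) := fun a b hab => by
  simp only [huberDeriv_eq_max_min hτ]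
  gcongr

lemma abs_le_normInf {d : ℕ} (v : Fin d → ℝ) (j : Fin d) : |v j| ≤ normInf v :=
  le_ciSup (f := fun j => |v j|) (Set.finite_range _).bddAbove j

lemma abs_sum_mul_le_normInf_mul_norm1 {d : ℕ} (v u : Fin d → ℝ) :
    |∑ j, v j * u j| ≤ normInf v * norm1 u := by
  rw [norm1, Finset.mul_sum]
  refine (Finset.abs_sum_le_sum_abs _ _).trans (Finset.sum_le_sum fun j _ => ?_)
  rw [abs_mul]
  exact mul_le_mul_of_nonneg_right (abs_le_normInf v j) (abs_nonneg _)

lemma abs_le_one_of_mem_l1Subdiff {d : ℕ} {β ξ : Fin d → ℝ} (hξ : ξ ∈ l1Subdiff β) (j : Fin d) :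
    |ξ j| ≤ 1 := by
  have hj := hξ j
  split_ifs at hj with hβ
  · exact abs_le.2 hj
  · rcases Real.sign_apply_eq_of_ne_zero _ hβ with h | h <;> simp [hj, h]

lemma mul_self_eq_abs_of_mem_l1Subdiff {d : ℕ} {β ξ : Fin d → ℝ} (hξ : ξ ∈ l1Subdiff β)
    (j : Fin d) : ξ j * β j = |β j| := by
  have hj := hξ j
  split_ifs at hj with hβ
  · simp [hβ]
  · rcases lt_or_gt_of_ne hβ with h | h
    · rw [hj, Real.sign_of_neg h, abs_of_neg h]; ring
    · rw [hj, Real.sign_of_pos h, abs_of_pos h]; ring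

lemma sum_empGrad_mul {n d : ℕ} (y : Fin n → ℝ) (X : Fin n → Fin d → ℝ) (τ : ℝ)
    (β v : Fin d → ℝ) :
    ∑ j, empGrad y X τ β j * v j =
      -(n : ℝ)⁻¹ * ∑ i, huberDeriv τ (y i - ∑ j, X i j * β j) * ∑ j, X i j * v j := by
  simp only [empGrad, Finset.mul_sum, Finset.sum_mul]
  rw [Finset.sum_comm]
  refine Finset.sum_congr rfl fun i _ => Finset.sum_congr rfl fun j _ => ?_
  ring

lemma sum_sub_empGrad_mul_sub_nonneg {n d : ℕ} (y : Fin n → ℝ) (X : Fin n → Fin d → ℝ)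
    {τ : ℝ} (hτ : 0 ≤ τ) (β β' : Fin d → ℝ) :
    0 ≤ ∑ j, (empGrad y X τ β j - empGrad y X τ β' j) * (β j - β' j) := by
  set r : (Fin d → ℝ) → Fin n → ℝ := fun b i => y i - ∑ j, X i j * b j
  have hXr : ∀ i, ∑ j, X i j * (β j - β' j) = r β' i - r β i := fun i => by
    simp only [r, mul_sub, Finset.sum_sub_distrib]; ring
  have hsum : ∑ j, (empGrad y X τ β j - empGrad y X τ β' j) * (β j - β' j) =
      (n : ℝ)⁻¹ * ∑ i, (huberDeriv τ (r β i) - huberDeriv τ (r β' i)) * (r β i - r β' i) := by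
    conv_lhs => simp only [sub_mul, Finset.sum_sub_distrib]
    rw [sum_empGrad_mul, sum_empGrad_mul, Finset.mul_sum, Finset.mul_sum, Finset.mul_sum,
      ← Finset.sum_sub_distrib]
    refine Finset.sum_congr rfl fun i _ => ?_
    rw [hXr]
    ring
  rw [hsum]
  exact mul_nonneg (by positivity) (Finset.sum_nonneg fun i _ =>
    (monotone_huberDeriv hτ).sub_mul_sub_nonneg _ _)

lemma le_sum_penalty_mul_sub {d : ℕ} {E : Finset (Fin d)} {lam ξ βt βs : Fin d → ℝ} {m : ℝ}
    (hξ : ξ ∈ l1Subdiff βt) (hβs : ∀ j ∉ E, βs j = 0) (hm : ∀ j ∉ E, m ≤ lam j) :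
    m * ∑ j ∈ Eᶜ, |βt j - βs j| - normInf lam * ∑ j ∈ E, |βt j - βs j| ≤
      ∑ j, lam j * ξ j * (βt j - βs j) := by
  rw [← Finset.sum_add_sum_compl E, Finset.mul_sum, Finset.mul_sum, sub_eq_neg_add,
    ← Finset.sum_neg_distrib]
  refine add_le_add (Finset.sum_le_sum fun j _ => ?_) (Finset.sum_le_sum fun j hj => ?_)
  · have hlam : |lam j * ξ j| ≤ normInf lam := by
      rw [abs_mul]
      exact (mul_le_of_le_one_right (abs_nonneg _) (abs_le_one_of_mem_l1Subdiff hξ j)).trans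
        (abs_le_normInf lam j)
    calc -(normInf lam * |βt j - βs j|)
        ≤ -(|lam j * ξ j| * |βt j - βs j|) :=
          neg_le_neg (mul_le_mul_of_nonneg_right hlam (abs_nonneg _))
      _ = -|lam j * ξ j * (βt j - βs j)| := by rw [abs_mul (lam j * ξ j)]
      _ ≤ lam j * ξ j * (βt j - βs j) := neg_abs_le _
  · rw [Finset.mem_compl] at hj
    rw [hβs j hj, sub_zero, mul_assoc, mul_self_eq_abs_of_mem_l1Subdiff hξ j]
    exact mul_le_mul_of_nonneg_right (hm j hj) (abs_nonneg _)

lemma sum_penalty_mul_sub_le {n d : ℕ} (y : Fin n → ℝ) (X : Fin n → Fin d → ℝ) {τ : ℝ}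
    (hτ : 0 ≤ τ) {lam ξ βt : Fin d → ℝ} {ε : ℝ}
    (hε : normInf (fun j => empGrad y X τ βt j + lam j * ξ j) ≤ ε) (β : Fin d → ℝ) :
    ∑ j, lam j * ξ j * (βt j - β j) ≤
      (ε + normInf (empGrad y X τ β)) * norm1 (fun j => βt j - β j) := by
  have hu : 0 ≤ norm1 (fun j => βt j - β j) := Finset.sum_nonneg fun j _ => abs_nonneg _
  have hopt := (le_abs_self _).trans
    (abs_sum_mul_le_normInf_mul_norm1 (fun j => empGrad y X τ βt j + lam j * ξ j)
      (fun j => βt j - β j))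
  have hgrad := neg_abs_le _ |>.trans'
    (neg_le_neg (abs_sum_mul_le_normInf_mul_norm1 (empGrad y X τ β) (fun j => βt j - β j)))
  have hmono := sum_sub_empGrad_mul_sub_nonneg y X hτ βt β
  have hsplit : ∑ j, lam j * ξ j * (βt j - β j) =
      ∑ j, (empGrad y X τ βt j + lam j * ξ j) * (βt j - β j) -
        ∑ j, (empGrad y X τ βt j - empGrad y X τ β j) * (βt j - β j) -
        ∑ j, empGrad y X τ β j * (βt j - β j) := by
    simp only [← Finset.sum_sub_distrib]
    exact Finset.sum_congr rfl fun j _ => by ring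
  linarith [mul_le_mul_of_nonneg_right hε hu]

lemma cone_of_isEpsOptimal {n d : ℕ} (y : Fin n → ℝ) (X : Fin n → Fin d → ℝ) {τ : ℝ}
    (hτ : 0 ≤ τ) {E : Finset (Fin d)} {βs : Fin d → ℝ} (hβs : ∀ j ∉ E, βs j = 0)
    {lam : Fin d → ℝ} {ε : ℝ} {βt : Fin d → ℝ} (hopt : IsEpsOptimal y X τ lam ε βt) :
    ((⨅ j : {j : Fin d // j ∉ E}, lam j) - normInf (empGrad y X τ βs) - ε) *
        ∑ j ∈ Eᶜ, |βt j - βs j| ≤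
      (normInf lam + normInf (empGrad y X τ βs) + ε) * ∑ j ∈ E, |βt j - βs j| := by
  obtain ⟨ξ, hξ, hε⟩ := hopt
  have hm : ∀ j ∉ E, (⨅ j : {j : Fin d // j ∉ E}, lam j) ≤ lam j := fun j hj =>
    ciInf_le (Set.finite_range _).bddBelow (⟨j, hj⟩ : {j : Fin d // j ∉ E})
  have hlow := le_sum_penalty_mul_sub hξ hβs hm
  have hup := sum_penalty_mul_sub_le y X hτ hε βs
  have hsplit : norm1 (fun j => βt j - βs j) =
      ∑ j ∈ E, |βt j - βs j| + ∑ j ∈ Eᶜ, |βt j - βs j| :=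
    (Finset.sum_add_sum_compl E _).symm
  rw [hsplit] at hup
  linarith

theorem statement_15_general {n d : ℕ} (y : Fin n → ℝ) (X : Fin n → Fin d → ℝ)
    (τ : ℝ) (hτ : 0 < τ)
    (E : Finset (Fin d)) (βs : Fin d → ℝ) (hβs : ∀ j ∉ E, βs j = 0)
    (lam : Fin d → ℝ)
    (ε lam0 : ℝ) (hlam0pos : 0 < lam0)
    (h1 : normInf lam ≤ lam0)
    (h2 : 4 * (normInf (empGrad y X τ βs) + ε) ≤ lam0)
    (h3 : lam0 / 2 ≤ ⨅ j : {j : Fin d // j ∉ E}, lam (j : Fin d))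
    (βt : Fin d → ℝ) (hopt : IsEpsOptimal y X τ lam ε βt) :
    ∑ j ∈ Eᶜ, |βt j - βs j| ≤
      (normInf lam + normInf (empGrad y X τ βs) + ε) /
        ((⨅ j : {j : Fin d // j ∉ E}, lam (j : Fin d)) -
          normInf (empGrad y X τ βs) - ε) *
        ∑ j ∈ E, |βt j - βs j| ∧
    ∑ j ∈ Eᶜ, |βt j - βs j| ≤ 5 * ∑ j ∈ E, |βt j - βs j| := by
  have hcone := cone_of_isEpsOptimal y X hτ.le hβs hopt
  have hgap : 0 < (⨅ j : {j : Fin d // j ∉ E}, lam j) - normInf (empGrad y X τ βs) - ε := by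
    linarith
  have hratio : (normInf lam + normInf (empGrad y X τ βs) + ε) /
      ((⨅ j : {j : Fin d // j ∉ E}, lam j) - normInf (empGrad y X τ βs) - ε) ≤ 5 := by
    rw [div_le_iff₀ hgap]
    linarith
  have hbound : ∑ j ∈ Eᶜ, |βt j - βs j| ≤
      (normInf lam + normInf (empGrad y X τ βs) + ε) /
        ((⨅ j : {j : Fin d // j ∉ E}, lam j) - normInf (empGrad y X τ βs) - ε) *
        ∑ j ∈ E, |βt j - βs j| := by
    rw [div_mul_eq_mul_div, le_div_iff₀ hgap]
    linarith
  exact ⟨hbound, hbound.trans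
    (mul_le_mul_of_nonneg_right hratio (Finset.sum_nonneg fun j _ => abs_nonneg _))⟩

/-- Lemma C.5: cone constraint for `ε`-optimal solutions under a
lower bound on the penalization outside `E`. -/
theorem statement_15 {n d : ℕ} (y : Fin n → ℝ) (X : Fin n → Fin d → ℝ)
    (τ : ℝ) (hτ : 0 < τ)
    (E : Finset (Fin d)) (βs : Fin d → ℝ) (hβs : ∀ j ∉ E, βs j = 0)
    (lam : Fin d → ℝ) (hlam : ∀ j, 0 ≤ lam j)
    (ε lam0 : ℝ) (hε : 0 < ε) (hlam0pos : 0 < lam0)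
    (h1 : normInf lam ≤ lam0)
    (h2 : 4 * (normInf (empGrad y X τ βs) + ε) ≤ lam0)
    (h3 : lam0 / 2 ≤ ⨅ j : {j : Fin d // j ∉ E}, lam (j : Fin d))
    (βt : Fin d → ℝ) (hopt : IsEpsOptimal y X τ lam ε βt) :
    ∑ j ∈ Eᶜ, |βt j - βs j| ≤
      (normInf lam + normInf (empGrad y X τ βs) + ε) /
        ((⨅ j : {j : Fin d // j ∉ E}, lam (j : Fin d)) -
          normInf (empGrad y X τ βs) - ε) *
        ∑ j ∈ E, |βt j - βs j| ∧
    ∑ j ∈ Eᶜ, |βt j - βs j| ≤ 5 * ∑ j ∈ E, |βt j - βs j| :=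
  statement_15_general y X τ hτ E βs hβs lam ε lam0 hlam0pos h1 h2 h3 βt hopt
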